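/- arXiv:1208.4346 — 3 statements merged into one kernel-verified Lean document; each statement's English description precedes it below -/
import Mathlib

section
/- If T is a bounded linear operator on a complex Hilbert space such that |T|² ≤ (Re T)², then T is self-adjoint. Here |T| = √(T*T) and Re T = (T + T*)/2. -/
open ContinuousLinearMap in
/-- `|T| = √(T*T)`, the positive square root of `T*T`. -/
noncomputable def opAbs {H : Type*} [NormedAddCommGroup H] [InnerProductSpace ℂ H]
    [CompleteSpace H] (T : H →L[ℂ] H) : H →L[ℂ] H :=
  CFC.sqrt (adjoint T * T)

open ContinuousLinearMap in
/-- `Re T = (T + T*)/2`. -/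
noncomputable def opRe {H : Type*} [NormedAddCommGroup H] [InnerProductSpace ℂ H]
    [CompleteSpace H] (T : H →L[ℂ] H) : H →L[ℂ] H :=
  (2 : ℂ)⁻¹ • (T + adjoint T)

/-- `|Re T| = √((Re T)²)`. -/
noncomputable def opAbsRe {H : Type*} [NormedAddCommGroup H] [InnerProductSpace ℂ H]
    [CompleteSpace H] (T : H →L[ℂ] H) : H →L[ℂ] H :=
  CFC.sqrt (opRe T * opRe T)

open ContinuousLinearMap
variable {H : Type*} [NormedAddCommGroup H] [InnerProductSpace ℂ H] [CompleteSpace H]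

open scoped InnerProductSpace ComplexConjugate

lemma im_inner_apply_self_eq_zero {A : H →L[ℂ] H} (hA : IsSelfAdjoint A) (x : H) :
    (⟪A x, x⟫_ℂ).im = 0 := by
  have h1 : ⟪A x, x⟫_ℂ = ⟪x, A x⟫_ℂ := by
    conv_lhs => rw [← (isSelfAdjoint_iff'.mp hA)]
    exact adjoint_inner_left A x x
  have h2 : (starRingEnd ℂ) ⟪A x, x⟫_ℂ = ⟪A x, x⟫_ℂ := by
    rw [inner_conj_symm]; exact h1.symm
  exact Complex.conj_eq_iff_im.mp h2

private lemma aux_eigen (B : H →L[ℂ] H) (c : ℝ) (v : H) :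
    B (B v + ((c : ℝ) : ℂ) • v) - ((c : ℝ) : ℂ) • (B v + ((c : ℝ) : ℂ) • v)
      = B (B v) - ((c ^ 2 : ℝ) : ℂ) • v := by
  have hsc : ((c : ℝ) : ℂ) • (((c : ℝ) : ℂ) • v) = ((c ^ 2 : ℝ) : ℂ) • v := by
    rw [smul_smul, ← Complex.ofReal_mul, ← pow_two]
  rw [map_add, map_smul, smul_add, hsc]
  abel

private lemma aux_neg (B : H →L[ℂ] H) (c : ℝ) (v : H) :
    B v - ((-c : ℝ) : ℂ) • v = B v + ((c : ℝ) : ℂ) • v := by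
  push_cast
  module

set_option maxHeartbeats 1000000 in
lemma key_zero (A B : H →L[ℂ] H) (hA : IsSelfAdjoint A) (hB : IsSelfAdjoint B)
    (hineq : ∀ x : H, ‖B x‖ ^ 2 ≤ 2 * (⟪A x, B x⟫_ℂ).im) : B = 0 := by
  by_contra hne
  have hβ : 0 < ‖B‖ := norm_pos_iff.mpr hne
  set β := ‖B‖ with hβdef
  set M := ‖A‖ with hMdef
  have hM0 : 0 ≤ M := norm_nonneg _
  -- the key estimate
  have hstar : ∀ (l : ℝ) (x : H), ‖B x‖ ^ 2 ≤ 2 * (M * ‖x‖ * ‖B x - (l : ℂ) • x‖) := by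
    intro l x
    have h1 : (⟪A x, B x⟫_ℂ).im = (⟪A x, B x - (l : ℂ) • x⟫_ℂ).im := by
      rw [inner_sub_right, inner_smul_right]
      simp [Complex.mul_im, im_inner_apply_self_eq_zero hA x]
    have h2 : (⟪A x, B x - (l : ℂ) • x⟫_ℂ).im ≤ M * ‖x‖ * ‖B x - (l : ℂ) • x‖ := by
      calc (⟪A x, B x - (l : ℂ) • x⟫_ℂ).im ≤ ‖⟪A x, B x - (l : ℂ) • x⟫_ℂ‖ :=
            (le_abs_self _).trans (Complex.abs_im_le_norm _)
        _ ≤ ‖A x‖ * ‖B x - (l : ℂ) • x‖ := norm_inner_le_norm _ _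
        _ ≤ M * ‖x‖ * ‖B x - (l : ℂ) • x‖ := by
            have := A.le_opNorm x
            have := norm_nonneg (B x - (l : ℂ) • x)
            nlinarith
    calc ‖B x‖ ^ 2 ≤ 2 * (⟪A x, B x⟫_ℂ).im := hineq x
      _ ≤ 2 * (M * ‖x‖ * ‖B x - (l : ℂ) • x‖) := by rw [h1]; linarith
  -- approximate eigenvectors at ±β
  have approx : ∀ ε : ℝ, 0 < ε → ∃ (x : H) (l : ℝ),
      ‖x‖ = 1 ∧ (l = β ∨ l = -β) ∧ ‖B x - (l : ℂ) • x‖ ≤ ε := by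
    intro ε hε
    set η := min (β / 2) (ε ^ 4 / (4 * β ^ 3)) with hηdef
    have hη0 : 0 < η := lt_min (by positivity) (by positivity)
    have hηβ : η ≤ β / 2 := min_le_left _ _
    have hηε : η ≤ ε ^ 4 / (4 * β ^ 3) := min_le_right _ _
    obtain ⟨x₁, hx₁⟩ := B.exists_mul_lt_of_lt_opNorm (r := β - η) (by linarith) (by linarith)
    have hx₁0 : x₁ ≠ 0 := by
      rintro rfl; simp at hx₁
    have hnx₁ : 0 < ‖x₁‖ := norm_pos_iff.mpr hx₁0
    set x₀ := ((‖x₁‖⁻¹ : ℝ) : ℂ) • x₁ with hx₀def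
    have hx₀ : ‖x₀‖ = 1 := by
      rw [hx₀def, norm_smul, Complex.norm_real, Real.norm_eq_abs, abs_inv, abs_norm,
        inv_mul_cancel₀ hnx₁.ne']
    have hBx₀ : β - η ≤ ‖B x₀‖ := by
      rw [hx₀def, map_smul, norm_smul, Complex.norm_real, Real.norm_eq_abs, abs_inv, abs_norm]
      rw [le_inv_mul_iff₀ hnx₁, mul_comm]
      exact hx₁.le
    have hBx₀le : ‖B x₀‖ ≤ β := by
      have := B.le_opNorm x₀; rwa [hx₀, mul_one] at this
    have hB2le : ‖B (B x₀)‖ ≤ β ^ 2 := by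
      have h1 := B.le_opNorm (B x₀)
      nlinarith
    -- r bound
    set r := ‖B (B x₀) - ((β ^ 2 : ℝ) : ℂ) • x₀‖ with hrdef
    have hr0 : 0 ≤ r := norm_nonneg _
    have hre : RCLike.re ⟪B (B x₀), ((β ^ 2 : ℝ) : ℂ) • x₀⟫_ℂ = β ^ 2 * ‖B x₀‖ ^ 2 := by
      have h1 : ⟪B (B x₀), x₀⟫_ℂ = ⟪B x₀, B x₀⟫_ℂ := by
        have h2 := adjoint_inner_left B x₀ (B x₀)
        rwa [isSelfAdjoint_iff'.mp hB] at h2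
      rw [inner_smul_right, h1, inner_self_eq_norm_sq_to_K]
      norm_cast
      simp [← Complex.ofReal_mul, ← Complex.ofReal_pow]
    have h4 : 4 * β ^ 3 * η ≤ ε ^ 4 := by
      have := (le_div_iff₀ (by positivity : (0:ℝ) < 4 * β ^ 3)).mp hηε
      linarith
    have hrsq : r ^ 2 ≤ ε ^ 4 := by
      have hexp := norm_sub_sq (𝕜 := ℂ) (B (B x₀)) (((β ^ 2 : ℝ) : ℂ) • x₀)
      rw [hre] at hexp
      have hns : ‖((β ^ 2 : ℝ) : ℂ) • x₀‖ = β ^ 2 := by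
        rw [norm_smul, hx₀, mul_one, Complex.norm_real, Real.norm_eq_abs,
          abs_of_nonneg (by positivity)]
      rw [hns, ← hrdef] at hexp
      have hβη : 0 ≤ β - η := by linarith
      have e1 : ‖B (B x₀)‖ ^ 2 ≤ β ^ 4 := by nlinarith [norm_nonneg (B (B x₀))]
      have e2 : (β - η) ^ 2 ≤ ‖B x₀‖ ^ 2 := by nlinarith
      have e3 : 2 * β ^ 2 * (β - η) ^ 2 ≤ 2 * β ^ 2 * ‖B x₀‖ ^ 2 := by nlinarith
      nlinarith [sq_nonneg (β * η)]
    have hrε : r ≤ ε ^ 2 := by nlinarith [sq_nonneg ε]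
    set y := B x₀ + ((β : ℝ) : ℂ) • x₀ with hydef
    have hkey : B y - ((β : ℝ) : ℂ) • y = B (B x₀) - ((β ^ 2 : ℝ) : ℂ) • x₀ := by
      rw [hydef]; exact aux_eigen B β x₀
    by_cases hcase : ε ≤ ‖y‖
    · have hy0 : 0 < ‖y‖ := lt_of_lt_of_le hε hcase
      refine ⟨((‖y‖⁻¹ : ℝ) : ℂ) • y, β, ?_, Or.inl rfl, ?_⟩
      · rw [norm_smul, Complex.norm_real, Real.norm_eq_abs, abs_inv, abs_norm,
          inv_mul_cancel₀ hy0.ne']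
      · have heq : B (((‖y‖⁻¹ : ℝ) : ℂ) • y) - ((β : ℝ) : ℂ) • (((‖y‖⁻¹ : ℝ) : ℂ) • y)
            = ((‖y‖⁻¹ : ℝ) : ℂ) • (B y - ((β : ℝ) : ℂ) • y) := by
          rw [map_smul, smul_sub, smul_comm]
        rw [heq, hkey, norm_smul, Complex.norm_real, Real.norm_eq_abs, abs_inv, abs_norm,
          ← hrdef, inv_mul_le_iff₀ hy0]
        calc r ≤ ε ^ 2 := hrε
          _ = ε * ε := sq ε
          _ ≤ ‖y‖ * ε := by nlinarith
    · refine ⟨x₀, -β, hx₀, Or.inr rfl, ?_⟩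
      have hxy : B x₀ - ((-β : ℝ) : ℂ) • x₀ = y := by
        rw [hydef]; exact aux_neg B β x₀
      rw [hxy]; linarith [not_le.mp hcase]
  -- conclude
  obtain ⟨x, l, hx1, hl, hxl⟩ := approx (min (β / 2) (β ^ 2 / (16 * (M + 1)))) (by positivity)
  set ε := min (β / 2) (β ^ 2 / (16 * (M + 1))) with hεdef
  have hε1 : ε ≤ β / 2 := min_le_left _ _
  have hε2 : ε ≤ β ^ 2 / (16 * (M + 1)) := min_le_right _ _
  have hε0 : 0 < ε := lt_min (by positivity) (by positivity)
  have hlx : ‖((l : ℝ) : ℂ) • x‖ = β := by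
    rw [norm_smul, hx1, mul_one, Complex.norm_real, Real.norm_eq_abs]
    rcases hl with rfl | rfl
    · exact abs_of_pos hβ
    · rw [abs_neg]; exact abs_of_pos hβ
  have hBxge : β - ε ≤ ‖B x‖ := by
    have h1 : ‖((l : ℝ) : ℂ) • x‖ - ‖B x‖ ≤ ‖((l : ℝ) : ℂ) • x - B x‖ := norm_sub_norm_le _ _
    rw [norm_sub_rev, hlx] at h1
    linarith
  have hfin := hstar l x
  rw [hx1] at hfin
  have hεle : (2 * M) * ε ≤ (2 * M) * (β ^ 2 / (16 * (M + 1))) :=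
    mul_le_mul_of_nonneg_left hε2 (by linarith)
  have hq : (2 * M) * (β ^ 2 / (16 * (M + 1))) ≤ β ^ 2 / 8 := by
    rw [mul_div_assoc', div_le_div_iff₀ (by positivity) (by norm_num)]
    nlinarith
  nlinarith [norm_nonneg (B x - (l : ℂ) • x), hxl]

set_option maxHeartbeats 1000000 in
set_option synthInstance.maxHeartbeats 1000000 in
/-- Fong–Istrățescu: if `|T|² ≤ (Re T)²` then `T` is self-adjoint. -/
theorem fong_istratescu (T : H →L[ℂ] H)
    (h : opAbs T * opAbs T ≤ opRe T * opRe T) : IsSelfAdjoint T := by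
  set A := opRe T with hAdef
  have hA : IsSelfAdjoint A := by
    rw [IsSelfAdjoint, hAdef, opRe, star_smul, star_add, star_eq_adjoint, star_eq_adjoint,
      adjoint_adjoint]
    rw [show star (2:ℂ)⁻¹ = (2:ℂ)⁻¹ by simp]
    rw [add_comm]
  have hpos : (0 : H →L[ℂ] H) ≤ adjoint T * T := by
    rw [nonneg_iff_isPositive]
    have := (isPositive_one (E := H) (𝕜 := ℂ)).adjoint_conj T
    simpa [mul_def, one_def] using this
  have hsq : opAbs T * opAbs T = adjoint T * T := CFC.sqrt_mul_sqrt_self _ hpos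
  have h2 : adjoint T * T ≤ A * A := hsq ▸ h
  have hnorm : ∀ x : H, ‖T x‖ ^ 2 ≤ ‖A x‖ ^ 2 := by
    intro x
    have hp := ((le_def _ _).mp h2).2 x
    rw [reApplyInnerSelf_apply] at hp
    have e0 : (A * A - adjoint T * T) x = A (A x) - adjoint T (T x) := rfl
    rw [e0, inner_sub_left] at hp
    have e1 : ⟪adjoint T (T x), x⟫_ℂ = ⟪T x, T x⟫_ℂ := adjoint_inner_left T x (T x)
    have e2 : ⟪A (A x), x⟫_ℂ = ⟪A x, A x⟫_ℂ := by
      have := adjoint_inner_left A x (A x)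
      rwa [isSelfAdjoint_iff'.mp hA] at this
    rw [e1, e2, map_sub, inner_self_eq_norm_sq, inner_self_eq_norm_sq] at hp
    linarith
  set B := (2 * Complex.I)⁻¹ • (T - adjoint T) with hBdef
  have hB : IsSelfAdjoint B := by
    rw [IsSelfAdjoint, hBdef, star_smul, star_sub, star_eq_adjoint, star_eq_adjoint,
      adjoint_adjoint]
    rw [show star (2 * Complex.I)⁻¹ = -(2 * Complex.I)⁻¹ by
      simp [Complex.star_def, mul_comm]]
    rw [neg_smul, ← smul_neg, neg_sub]
  have hT : T = A + Complex.I • B := by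
    rw [hAdef, hBdef, opRe, smul_smul]
    rw [show Complex.I * (2 * Complex.I)⁻¹ = (2:ℂ)⁻¹ by
      field_simp [Complex.I_ne_zero]]
    module
  have hineq : ∀ x : H, ‖B x‖ ^ 2 ≤ 2 * (⟪A x, B x⟫_ℂ).im := by
    intro x
    have h1 := hnorm x
    rw [hT] at h1
    have e3 : (A + Complex.I • B) x = A x + Complex.I • B x := rfl
    rw [e3, norm_add_sq (𝕜 := ℂ)] at h1
    have e4 : ‖Complex.I • B x‖ = ‖B x‖ := by
      rw [norm_smul, Complex.norm_I, one_mul]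
    have e5 : RCLike.re ⟪A x, Complex.I • B x⟫_ℂ = -(⟪A x, B x⟫_ℂ).im := by
      rw [inner_smul_right]
      simp [Complex.mul_re]
    rw [e4, e5] at h1
    linarith
  have hB0 : B = 0 := key_zero A B hA hB hineq
  rw [hBdef, smul_eq_zero] at hB0
  rcases hB0 with hc | hTT
  · exact absurd hc (by simp [Complex.I_ne_zero])
  · rw [isSelfAdjoint_iff']
    rw [sub_eq_zero] at hTT
    exact hTT.symm
end

section
/- If T is a normal bounded operator on a complex Hilbert space and |T| ≤ |Re T|, then T is self-adjoint. -/
open StarAlgebra in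
/-- Anything commuting with `x` and `star x` commutes with every element of the elemental
star algebra generated by `x`. -/
lemma commute_of_mem_elemental {A : Type*} [CStarAlgebra A] {x y c : A}
    (hy : y ∈ elemental ℂ x) (h1 : Commute c x) (h2 : Commute c (star x)) :
    Commute c y := by
  refine elemental.induction_on (R := ℂ) (P := fun u _ => Commute c u) hy h1 h2 (fun r => (Algebra.commutes r c).symm)
    (fun u _ v _ pu pv => pu.add_right pv) (fun u _ v _ pu pv => pu.mul_right pv) ?_
  intro s _ hP v hv
  have hclosed : IsClosed {u : A | Commute c u} :=
    isClosed_eq ((continuous_const.mul continuous_id)) (continuous_id.mul continuous_const)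
  exact closure_minimal (fun u hu => hP u hu) hclosed hv

lemma sqrt_mem_elemental {A : Type*} [CStarAlgebra A] [PartialOrder A] [StarOrderedRing A]
    {x : A} (hx : 0 ≤ x) : CFC.sqrt x ∈ StarAlgebra.elemental ℂ x := by
  have : CFC.sqrt x = cfcₙ NNReal.sqrt x := rfl
  rw [this, cfcₙ_eq_cfc, cfc_nnreal_eq_real _ _ hx,
    cfc_real_eq_complex _ (IsSelfAdjoint.of_nonneg hx)]
  exact cfc_mem_elemental _ x

lemma commute_sqrt {A : Type*} [CStarAlgebra A] [PartialOrder A] [StarOrderedRing A]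
    {x c : A} (hx : 0 ≤ x) (h1 : Commute c x) : Commute c (CFC.sqrt x) :=
  commute_of_mem_elemental (sqrt_mem_elemental hx) h1
    (by rwa [(IsSelfAdjoint.of_nonneg hx).star_eq])

lemma mul_nonneg_of_commute {A : Type*} [CStarAlgebra A] [PartialOrder A] [StarOrderedRing A]
    {a b : A} (ha : 0 ≤ a) (hb : 0 ≤ b) (hab : Commute a b) : 0 ≤ a * b := by
  have h2 : Commute b (CFC.sqrt a) := commute_sqrt ha hab.symm
  have key : a * b = star (CFC.sqrt a) * b * CFC.sqrt a := by
    rw [(IsSelfAdjoint.of_nonneg (CFC.sqrt_nonneg (a := a))).star_eq]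
    rw [mul_assoc, h2.eq, ← mul_assoc, CFC.sqrt_mul_sqrt_self a ha]
  rw [key]
  exact star_left_conjugate_nonneg hb _

open ContinuousLinearMap
variable {H : Type*} [NormedAddCommGroup H] [InnerProductSpace ℂ H] [CompleteSpace H]

set_option synthInstance.maxHeartbeats 1000000 in
/-- A normal operator with `|T| ≤ |Re T|` is self-adjoint. -/
theorem selfAdjoint_of_normal (T : H →L[ℂ] H)
    (hnormal : adjoint T * T = T * adjoint T)
    (h : opAbs T ≤ opAbsRe T) : IsSelfAdjoint T := by
  rw [← star_eq_adjoint] at hnormal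
  set D : H →L[ℂ] H := (2 : ℂ)⁻¹ • (T - star T) with hD
  have key : star T * T = opRe T * opRe T + star D * D := by
    simp only [opRe, hD, ← star_eq_adjoint, star_smul, star_sub, star_add, star_star,
      Complex.star_def, map_inv₀, map_ofNat, smul_mul_assoc, mul_smul_comm, mul_add, add_mul, sub_mul, mul_sub,
      hnormal]
    module
  have hT2 : (0 : H →L[ℂ] H) ≤ adjoint T * T := by
    rw [← star_eq_adjoint]; exact star_mul_self_nonneg T
  have hReSA : IsSelfAdjoint (opRe T) := by
    simp only [IsSelfAdjoint, opRe, ← star_eq_adjoint, star_smul, star_add, star_star,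
      Complex.star_def, map_inv₀, map_ofNat]
    rw [add_comm]
  have hRe2 : (0 : H →L[ℂ] H) ≤ opRe T * opRe T := by
    have := star_mul_self_nonneg (opRe T)
    rwa [hReSA.star_eq] at this
  -- commutation facts
  have c1 : Commute (star T) T := hnormal
  have cRe_T : Commute (opRe T) T := by
    rw [opRe, ← star_eq_adjoint]
    exact ((Commute.refl T).add_left c1).smul_left _
  have cRe_sT : Commute (opRe T) (star T) := by
    rw [opRe, ← star_eq_adjoint]
    exact (c1.symm.add_left (Commute.refl (star T))).smul_left _
  have cRe_TT : Commute (opRe T) (adjoint T * T) := by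
    rw [← star_eq_adjoint]; exact cRe_sT.mul_right cRe_T
  have cRe2 : Commute (opRe T * opRe T) (adjoint T * T) := cRe_TT.mul_left cRe_TT
  have hcab : Commute (opAbs T) (opAbsRe T) := by
    have s1 : Commute (opRe T * opRe T) (opAbs T) := commute_sqrt hT2 cRe2
    exact commute_sqrt hRe2 s1.symm
  have ha_nonneg : (0 : H →L[ℂ] H) ≤ opAbs T := CFC.sqrt_nonneg _
  have hb_nonneg : (0 : H →L[ℂ] H) ≤ opAbsRe T := CFC.sqrt_nonneg _
  have ha2 : opAbs T * opAbs T = adjoint T * T := CFC.sqrt_mul_sqrt_self _ hT2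
  have hb2 : opAbsRe T * opAbsRe T = opRe T * opRe T := CFC.sqrt_mul_sqrt_self _ hRe2
  have hge : opRe T * opRe T ≤ adjoint T * T := by
    rw [← star_eq_adjoint, key]
    exact le_add_of_nonneg_right (star_mul_self_nonneg D)
  have hle : adjoint T * T ≤ opRe T * opRe T := by
    have h0 : (0 : H →L[ℂ] H) ≤ opAbsRe T - opAbs T := sub_nonneg.2 h
    have hsum : (0 : H →L[ℂ] H) ≤ opAbsRe T + opAbs T := add_nonneg hb_nonneg ha_nonneg
    have hc : Commute (opAbsRe T + opAbs T) (opAbsRe T - opAbs T) :=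
      (((Commute.refl _).add_left hcab).sub_right (hcab.symm.add_left (Commute.refl _)))
    have hmul := mul_nonneg_of_commute hsum h0 hc
    have expand : (opAbsRe T + opAbs T) * (opAbsRe T - opAbs T)
        = opAbsRe T * opAbsRe T - opAbs T * opAbs T := by
      rw [mul_sub, add_mul, add_mul, hcab.eq]
      abel
    rw [expand] at hmul
    have := sub_nonneg.1 hmul
    rwa [ha2, hb2] at this
  have heq : adjoint T * T = opRe T * opRe T := le_antisymm hle hge
  have hDzero : star D * D = 0 := by
    have h1 : opRe T * opRe T + star D * D = opRe T * opRe T := by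
      rw [← key, star_eq_adjoint, heq]
    simpa using h1
  have hD0 : D = 0 := by rwa [CStarRing.star_mul_self_eq_zero_iff] at hDzero
  have : T - star T = 0 := by
    rcases smul_eq_zero.1 (hD ▸ hD0) with h' | h'
    · exact absurd h' (by norm_num)
    · exact h'
  have hT : T = star T := by rwa [sub_eq_zero] at this
  exact hT.symm
end

section
/- If T is an isometry on a complex Hilbert space and |T| ≤ |Re T|, then T is self-adjoint. -/
open ContinuousLinearMap
variable {H : Type*} [NormedAddCommGroup H] [InnerProductSpace ℂ H] [CompleteSpace H]

set_option maxHeartbeats 1000000 in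
/-- An isometry with `|T| ≤ |Re T|` is self-adjoint. -/
theorem selfAdjoint_of_isometry (T : H →L[ℂ] H)
    (hiso : adjoint T * T = 1)
    (h : opAbs T ≤ opAbsRe T) : IsSelfAdjoint T := by
  set A := opRe T with hA
  have hAsa : IsSelfAdjoint A := by
    rw [IsSelfAdjoint, hA, opRe, star_smul, star_add, star_eq_adjoint, star_eq_adjoint,
      adjoint_adjoint]
    simp [add_comm]
  -- ‖T‖ ≤ 1
  have hTx : ∀ x : H, ‖T x‖ = ‖x‖ := by
    intro x
    have : (inner ℂ (T x) (T x) : ℂ) = inner ℂ x x := by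
      rw [← adjoint_inner_left]
      have : adjoint T (T x) = x := by
        have := congrArg (fun S : H →L[ℂ] H => S x) hiso
        simpa using this
      rw [this]
    have h1 := inner_self_eq_norm_sq (𝕜 := ℂ) (T x)
    have h2 := inner_self_eq_norm_sq (𝕜 := ℂ) x
    have : ‖T x‖ ^ 2 = ‖x‖ ^ 2 := by
      rw [← h1, ← h2, this]
    nlinarith [norm_nonneg (T x), norm_nonneg x]
  have hTnorm : ‖T‖ ≤ 1 := opNorm_le_bound T zero_le_one fun x => by rw [hTx, one_mul]
  have hAnorm : ‖A‖ ≤ 1 := by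
    rw [hA, opRe]
    calc ‖(2 : ℂ)⁻¹ • (T + adjoint T)‖ ≤ ‖(2:ℂ)⁻¹‖ * (‖T‖ + ‖adjoint T‖) := by
          rw [norm_smul]
          gcongr
          exact norm_add_le _ _
      _ ≤ ‖(2:ℂ)⁻¹‖ * (1 + 1) := by
          gcongr
          rw [← star_eq_adjoint, norm_star]; exact hTnorm
      _ = 1 := by norm_num
  -- opAbs T = 1
  have habs : opAbs T = 1 := by rw [opAbs, hiso, CFC.sqrt_one]
  set B := opAbsRe T with hB
  have hBnonneg : (0 : H →L[ℂ] H) ≤ B := CFC.sqrt_nonneg _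
  have hAA : A * A = star A * A := by rw [hAsa.star_eq]
  have hAAnonneg : (0 : H →L[ℂ] H) ≤ A * A := hAA ▸ star_mul_self_nonneg A
  have hBB : B * B = A * A := CFC.sqrt_mul_sqrt_self _ hAAnonneg
  have hBsa : IsSelfAdjoint B := IsSelfAdjoint.of_nonneg hBnonneg
  have hone : (1 : H →L[ℂ] H) ≤ B := habs ▸ h
  -- ‖B‖ ≤ 1
  have hBnorm : ‖B‖ ≤ 1 := by
    have h1 : ‖B‖ * ‖B‖ = ‖B * B‖ := by
      rw [← CStarRing.norm_star_mul_self, hBsa.star_eq]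
    have h2 : ‖A * A‖ ≤ 1 := by
      calc ‖A * A‖ ≤ ‖A‖ * ‖A‖ := norm_mul_le _ _
        _ ≤ 1 * 1 := mul_le_mul hAnorm hAnorm (norm_nonneg A) zero_le_one
        _ = 1 := one_mul 1
    nlinarith [norm_nonneg B, hBB ▸ h2, h1]
  -- B ≤ 1
  have hBle : B ≤ 1 := by
    calc B ≤ algebraMap ℝ (H →L[ℂ] H) ‖B‖ := hBsa.le_algebraMap_norm_self
      _ ≤ 1 := by
        have : (1 : H →L[ℂ] H) - algebraMap ℝ (H →L[ℂ] H) ‖B‖ =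
            algebraMap ℝ (H →L[ℂ] H) (1 - ‖B‖) := by
          simp [map_sub]
        have h0 : (0 : H →L[ℂ] H) ≤ algebraMap ℝ (H →L[ℂ] H) (1 - ‖B‖) := by
          rw [Algebra.algebraMap_eq_smul_one]
          have hs := star_mul_self_nonneg
            ((Real.sqrt (1 - ‖B‖) : ℝ) • (1 : H →L[ℂ] H))
          rwa [star_smul, star_one, star_trivial, smul_mul_smul_comm, one_mul,
            Real.mul_self_sqrt (by linarith)] at hs
        rw [← sub_nonneg, this]
        exact h0
  have hBeq : B = 1 := le_antisymm hBle hone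
  have hA2 : A * A = 1 := by rw [← hBB, hBeq, one_mul]
  -- expand: T² + T T* + T* T + T*² = 4
  have hexp : T * T + T * adjoint T + adjoint T * T + adjoint T * adjoint T
      = (4 : ℂ) • 1 := by
    have : ((2:ℂ)⁻¹ • (T + adjoint T)) * ((2:ℂ)⁻¹ • (T + adjoint T)) = 1 := by
      rw [← opRe, ← hA]; exact hA2
    rw [smul_mul_smul_comm] at this
    have h4 := congrArg (fun S => (4 : ℂ) • S) this
    simp only [smul_smul] at h4
    norm_num at h4
    calc T * T + T * adjoint T + adjoint T * T + adjoint T * adjoint T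
        = (T + adjoint T) * (T + adjoint T) := by noncomm_ring
      _ = (4:ℂ) • 1 := h4
  -- p := T T* is a projection, 1 - p ≥ 0
  set p := T * adjoint T with hp
  have hpproj : p * p = p := by
    rw [hp]
    calc T * adjoint T * (T * adjoint T) = T * (adjoint T * T) * adjoint T := by
          noncomm_ring
      _ = T * adjoint T := by rw [hiso, mul_one]
  have hpsa : IsSelfAdjoint p := by
    rw [IsSelfAdjoint, hp, star_mul, star_eq_adjoint, star_eq_adjoint, adjoint_adjoint]
  have hple : p ≤ 1 := by
    rw [← sub_nonneg]
    have : (1 : H →L[ℂ] H) - p = star (1 - p) * (1 - p) := by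
      rw [star_sub, star_one, hpsa.star_eq, sub_mul, mul_sub, mul_sub, hpproj,
        one_mul, mul_one]
      abel
    rw [this]
    exact star_mul_self_nonneg _
  -- S := T - T*, star S * S = 2•(p - 1) ≤ 0 and ≥ 0
  set S := T - adjoint T with hS
  have hSS : star S * S = (2 : ℂ) • (p - 1) := by
    rw [hS, star_sub, star_eq_adjoint, star_eq_adjoint, adjoint_adjoint, hp]
    have : (adjoint T - T) * (T - adjoint T)
        = adjoint T * T + T * adjoint T
          - (T * T + T * adjoint T + adjoint T * T + adjoint T * adjoint T)
          + (adjoint T * T + T * adjoint T) := by noncomm_ring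
    rw [this, hexp, hiso]
    module
  have hSSle : star S * S ≤ 0 := by
    rw [hSS, two_smul]
    have hp0 : p - 1 ≤ 0 := by simpa [sub_nonpos] using hple
    calc p - 1 + (p - 1) ≤ 0 + 0 := add_le_add hp0 hp0
      _ = 0 := add_zero 0
  have hSzero : S = 0 := by
    rw [← CStarRing.star_mul_self_eq_zero_iff]
    exact le_antisymm hSSle (star_mul_self_nonneg S)
  have : T = adjoint T := by rwa [hS, sub_eq_zero] at hSzero
  rw [IsSelfAdjoint, star_eq_adjoint]
  exact this.symm
end
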